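/- For every integer n ≥ 2, the function E_{n+1,1} is given explicitly by E_{n+1,1}(q,p) = (1/2) Σ_{i,j=1}^{n} (q^i q^j − q^{i+j}) p_i p_j, where q^k := 0 for k > n. -/

import Mathlib

open Matrix

noncomputable section

/-- Phase space ℝ^{2n}: pairs (q, p). -/
abbrev Phase (n : ℕ) := (Fin n → ℝ) × (Fin n → ℝ)

/-- Extended coordinates: `qext n q m` is `q^m` (1-based), with `q^0 := 1`
and `q^m := 0` for `m < 0` or `m > n`. -/
def qext (n : ℕ) (q : Fin n → ℝ) (m : ℤ) : ℝ :=
  if h : 1 ≤ m ∧ m ≤ (n : ℤ) then q ⟨m.toNat - 1, by omega⟩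
  else if m = 0 then 1 else 0

/-- The matrix `L(q)`: first column `-q^j`, superdiagonal `1`, all other entries `0`. -/
def Lmat (n : ℕ) (q : Fin n → ℝ) : Matrix (Fin n) (Fin n) ℝ :=
  Matrix.of fun j k => if (k : ℕ) = 0 then -q j else if (k : ℕ) = (j : ℕ) + 1 then 1 else 0

/-- The contravariant metric `G(q)` with entries `G^{jk} = q^{j+k-n-1}` (1-based indices). -/
def Gmat (n : ℕ) (q : Fin n → ℝ) : Matrix (Fin n) (Fin n) ℝ :=
  Matrix.of fun j k => qext n q ((j : ℤ) + (k : ℤ) + 1 - (n : ℤ))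

/-- The Killing tensors: `K_r = Σ_{k=0}^{r-1} q^k L^{r-1-k}` (so `K_1 = I`). -/
def Kmat (n : ℕ) (q : Fin n → ℝ) (r : ℕ) : Matrix (Fin n) (Fin n) ℝ :=
  ∑ k ∈ Finset.range r, qext n q (k : ℤ) • (Lmat n q) ^ (r - 1 - k)

/-- `E_{i,r}(q,p) = (1/2) Σ_{l,m} (K_r L^i G)^{lm} p_l p_m`. -/
def Efun (n i r : ℕ) : Phase n → ℝ := fun x =>
  (1 / 2) * ∑ l : Fin n, ∑ m : Fin n,
    (Kmat n x.1 r * (Lmat n x.1) ^ i * Gmat n x.1) l m * x.2 l * x.2 m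

/-- Canonical Poisson bracket on `ℝ^{2n}`. -/
def pb (n : ℕ) (f g : Phase n → ℝ) : Phase n → ℝ := fun x =>
  ∑ i : Fin n,
    (fderiv ℝ f x (Pi.single i 1, 0) * fderiv ℝ g x (0, Pi.single i 1)
      - fderiv ℝ f x (0, Pi.single i 1) * fderiv ℝ g x (Pi.single i 1, 0))


/-!
In the paper's 1-based indexing, left multiplication by `L` replaces row `j` by row `j + 1`
minus `q^j` times row `1` (row `n + 1` being zero). Starting from the Hankel matrix `G`, induction
on `i ≤ n` shows that `(L^i G)^{jk} = ± q^{j+k+i-n-1}`, with sign `+` when `j, k ≤ n - i`, sign `-`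
when `j, k > n - i`, and `0` otherwise. Hence `L^n G = -(q^{j+k-1})`, and one more multiplication
by `L` gives `q^j q^k - q^{j+k}`.
-/

lemma qext_zero (n : ℕ) (q : Fin n → ℝ) : qext n q 0 = 1 := by
  simp [qext]

lemma qext_eq_zero (n : ℕ) (q : Fin n → ℝ) {a : ℤ} (h : a < 0 ∨ (n : ℤ) < a) :
    qext n q a = 0 := by
  rw [qext, dif_neg (by omega), if_neg (by omega)]

lemma qext_eq_of_eq_add_one (n : ℕ) (q : Fin n → ℝ) {a : ℤ} (j : Fin n) (h : a = j + 1) :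
    qext n q a = q j := by
  rw [qext, dif_pos ⟨by omega, by omega⟩]
  congr
  omega

lemma Kmat_one (n : ℕ) (q : Fin n → ℝ) : Kmat n q 1 = 1 := by
  simp [Kmat, qext_zero]

lemma Lmat_mul_apply {α : Type*} (n : ℕ) (q : Fin n → ℝ) (B : Matrix (Fin n) α ℝ)
    (j : Fin n) (m : α) :
    (Lmat n q * B) j m = -q j * B ⟨0, j.pos⟩ m +
      if h : (j : ℕ) + 1 < n then B ⟨j + 1, h⟩ m else 0 := by
  have hsplit : ∀ k : Fin n, Lmat n q j k * B k m =
      (if k = ⟨0, j.pos⟩ then -q j * B k m else 0) +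
      (if h : (j : ℕ) + 1 < n then (if k = ⟨j + 1, h⟩ then B k m else 0) else 0) := by
    intro k
    simp only [Lmat, of_apply, Fin.ext_iff]
    split_ifs <;> grind
  simp only [mul_apply, hsplit, Finset.sum_add_distrib, Finset.sum_ite_eq', Finset.mem_univ,
    if_true]
  split_ifs <;> simp

lemma Lmat_pow_mul_Gmat_apply (n : ℕ) (q : Fin n → ℝ) {i : ℕ} (hi : i ≤ n) (j m : Fin n) :
    (Lmat n q ^ i * Gmat n q) j m =
      if (j : ℕ) + i < n ∧ (m : ℕ) + i < n then qext n q (j + m + i + 1 - n)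
      else if n ≤ (j : ℕ) + i ∧ n ≤ (m : ℕ) + i then -qext n q (j + m + i + 1 - n)
      else 0 := by
  induction i generalizing j with
  | zero =>
    rw [pow_zero, one_mul, if_pos ⟨by omega, by omega⟩]
    simp [Gmat]
  | succ i ih =>
    have hrow0 : (Lmat n q ^ i * Gmat n q) ⟨0, j.pos⟩ m =
        if (m : ℕ) + i + 1 = n then 1 else 0 := by
      rw [ih (by omega)]
      simp only [CharP.cast_eq_zero, zero_add]
      split_ifs <;> first
        | (exfalso; omega)
        | rfl
        | exact qext_eq_zero n q (by omega)
        | (rw [← qext_zero n q]; congr 1; omega)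
    have hwrap : (m : ℕ) + i + 1 = n → qext n q (j + m + ↑(i + 1) + 1 - n) = q j :=
      fun h => qext_eq_of_eq_add_one n q j (by omega)
    have hout : n ≤ (j : ℕ) + 1 → n ≤ (m : ℕ) + i →
        qext n q (j + m + ↑(i + 1) + 1 - n) = 0 :=
      fun hj hm => qext_eq_zero n q (by omega)
    rw [pow_succ', Matrix.mul_assoc, Lmat_mul_apply, hrow0]
    by_cases hj : (j : ℕ) + 1 < n
    · have harg : ((j + 1 : ℕ) : ℤ) + m + i + 1 - n = j + m + ↑(i + 1) + 1 - n := by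
        push_cast; ring
      rw [dif_pos hj, ih (by omega)]
      simp only [harg]
      split_ifs <;> first | (exfalso; omega) | ring1 | (rw [hwrap (by omega)]; ring1)
    · rw [dif_neg hj]
      split_ifs <;>
        first | (exfalso; omega) | ring1 | (rw [hwrap (by omega)]; ring1) |
          (rw [hout (by omega) (by omega)]; ring1)

lemma Lmat_pow_self_mul_Gmat_apply (n : ℕ) (q : Fin n → ℝ) (j m : Fin n) :
    (Lmat n q ^ n * Gmat n q) j m = -qext n q (j + m + 1) := by
  rw [Lmat_pow_mul_Gmat_apply n q le_rfl, if_neg (by omega), if_pos ⟨by omega, by omega⟩]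
  congr 2
  ring

lemma Lmat_pow_succ_self_mul_Gmat_apply (n : ℕ) (q : Fin n → ℝ) (j m : Fin n) :
    (Lmat n q ^ (n + 1) * Gmat n q) j m = q j * q m - qext n q (j + m + 2) := by
  rw [pow_succ', Matrix.mul_assoc, Lmat_mul_apply, Lmat_pow_self_mul_Gmat_apply,
    qext_eq_of_eq_add_one n q m (by simp)]
  split_ifs with hj
  · rw [Lmat_pow_self_mul_Gmat_apply,
      show ((j + 1 : ℕ) : ℤ) + m + 1 = j + m + 2 by push_cast; ring]
    ring
  · rw [qext_eq_zero n q (by omega)]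
    ring

theorem Efun_np1_one_explicit_general (n : ℕ) (x : Phase n) :
    Efun n (n + 1) 1 x =
      (1 / 2) * ∑ l : Fin n, ∑ m : Fin n,
        (x.1 l * x.1 m - qext n x.1 ((l : ℤ) + (m : ℤ) + 2)) * x.2 l * x.2 m := by
  simp only [Efun, Kmat_one, Matrix.one_mul, Lmat_pow_succ_self_mul_Gmat_apply]

/-- the explicit formula
`E_{n+1,1}(q,p) = (1/2) Σ_{i,j=1}^{n} (q^i q^j − q^{i+j}) p_i p_j`,
where `q^k := 0` for `k > n`. -/
theorem Efun_np1_one_explicit (n : ℕ) (hn : 2 ≤ n) (x : Phase n) :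
    Efun n (n + 1) 1 x =
      (1 / 2) * ∑ l : Fin n, ∑ m : Fin n,
        (x.1 l * x.1 m - qext n x.1 ((l : ℤ) + (m : ℤ) + 2)) * x.2 l * x.2 m :=
  Efun_np1_one_explicit_general n x
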